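/- Output-strict equilibrium-independent passivity of the learning block (dissipation inequality): let ε > 0, γ > 0, consider N players where player p has n^p actions, n = Σ_p n^p, and let σ : ℝⁿ → ℝⁿ apply the soft-max σ_ε blockwise, σ(z) = (σ_ε(z^p))_p. Fix z̄ ∈ ℝⁿ and define the storage function V(z) = Σ_p (lse_ε(z^p) − lse_ε(z̄^p) − σ_ε(z̄^p)ᵀ(z^p − z̄^p)). Then V(z) ≥ 0 for all z, V(z̄) = 0, and for every differentiable z : ℝ → ℝⁿ and continuous u : ℝ → ℝⁿ with ż(t) = γ(u(t) − z(t)) for all t, the derivative of t ↦ V(z(t)) satisfies d/dt V(z(t)) ≤ −γε‖σ(z(t)) − σ(z̄)‖₂² + γ(σ(z(t)) − σ(z̄))ᵀ(u(t) − z̄). -/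

import Mathlib

open Filter

/-- The soft-max function with temperature `ε`. -/
noncomputable def softmax (ε : ℝ) {m : ℕ} (w : Fin m → ℝ) : Fin m → ℝ :=
  fun i => Real.exp (w i / ε) / ∑ j, Real.exp (w j / ε)

/-- The log-sum-exp function with temperature `ε`. -/
noncomputable def lse (ε : ℝ) {m : ℕ} (w : Fin m → ℝ) : ℝ :=
  ε * Real.log (∑ j, Real.exp (w j / ε))

/-- The Bregman-divergence storage function
`V(z) = Σ_p (lse_ε(z^p) − lse_ε(z̄^p) − σ_ε(z̄^p)ᵀ(z^p − z̄^p))`. -/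
noncomputable def bregV (ε : ℝ) {N : ℕ} {nAct : Fin N → ℕ}
    (zbar z : ∀ p, Fin (nAct p) → ℝ) : ℝ :=
  ∑ p, (lse ε (z p) - lse ε (zbar p) - ∑ i, softmax ε (zbar p) i * (z p i - zbar p i))

/-!
Per block, `lse_ε` is the convex potential of `σ_ε`, and `V` is the sum of its Bregman
divergences. Since `ε log σ_ε(w)_i = w_i − lse_ε(w)`, differences `w − w̄` turn into
`ε (log σ_ε(w) − log σ_ε(w̄))` up to a constant shift which the simplex constraint
`Σ_i σ_ε(w)_i = 1` absorbs. Hence `V ≥ 0` is Gibbs' inequality, and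
`ε ‖σ(w) − σ(w̄)‖² ≤ (w − w̄)ᵀ(σ(w) − σ(w̄))` follows from `|log x − log y| ≥ |x − y|` on
`(0, 1]`. Along `ż = γ(u − z)` the derivative of `V` is `γ (σ(z) − σ(z̄))ᵀ(u − z)`; splitting
`u − z = (u − z̄) − (z − z̄)` and applying the second inequality gives the bound.
-/

open Finset Real

lemma mul_log_sub_log_le_sub {x y : ℝ} (hx : 0 < x) (hy : 0 < y) :
    y * (log x - log y) ≤ x - y := by
  have h := log_le_sub_one_of_pos (div_pos hx hy)
  rw [log_div hx.ne' hy.ne'] at h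
  calc y * (log x - log y) ≤ y * (x / y - 1) := mul_le_mul_of_nonneg_left h hy.le
    _ = x - y := by field_simp

lemma sub_le_log_sub_log {x y : ℝ} (hy : 0 < y) (hyx : y ≤ x) (hx1 : x ≤ 1) :
    x - y ≤ log x - log y := by
  have hx : 0 < x := hy.trans_le hyx
  have h := one_sub_inv_le_log_of_pos (div_pos hx hy)
  rw [log_div hx.ne' hy.ne', inv_div] at h
  calc x - y ≤ (x - y) / x := (le_div_iff₀ hx).mpr (by nlinarith)
    _ = 1 - y / x := by field_simp
    _ ≤ log x - log y := h

lemma sq_sub_le_log_sub_log_mul_sub {x y : ℝ} (hx : 0 < x) (hx1 : x ≤ 1) (hy : 0 < y)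
    (hy1 : y ≤ 1) : (x - y) ^ 2 ≤ (log x - log y) * (x - y) := by
  rcases le_total y x with h | h
  · nlinarith [sub_le_log_sub_log hy h hx1]
  · nlinarith [sub_le_log_sub_log hx h hy1]

section Softmax

variable {m : ℕ} {ε : ℝ}

lemma sum_exp_div_pos (hm : 0 < m) (ε : ℝ) (w : Fin m → ℝ) : 0 < ∑ j, exp (w j / ε) :=
  have : Nonempty (Fin m) := Fin.pos_iff_nonempty.mp hm
  sum_pos (fun _ _ => exp_pos _) univ_nonempty

lemma softmax_pos (ε : ℝ) (w : Fin m → ℝ) (i : Fin m) : 0 < softmax ε w i :=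
  div_pos (exp_pos _) (sum_exp_div_pos i.pos ε w)

lemma sum_softmax (hm : 0 < m) (ε : ℝ) (w : Fin m → ℝ) : ∑ i, softmax ε w i = 1 := by
  unfold softmax
  rw [← sum_div, div_self (sum_exp_div_pos hm ε w).ne']

lemma sum_softmax_sub_softmax (ε : ℝ) (w w' : Fin m → ℝ) :
    ∑ i, (softmax ε w i - softmax ε w' i) = 0 := by
  rcases Nat.eq_zero_or_pos m with rfl | hm
  · simp
  · rw [sum_sub_distrib, sum_softmax hm, sum_softmax hm, sub_self]

lemma softmax_le_one (ε : ℝ) (w : Fin m → ℝ) (i : Fin m) : softmax ε w i ≤ 1 := by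
  rw [← sum_softmax i.pos ε w]
  exact single_le_sum (fun j _ => (softmax_pos ε w j).le) (mem_univ i)

lemma mul_log_softmax (hε : ε ≠ 0) (w : Fin m → ℝ) (i : Fin m) :
    ε * log (softmax ε w i) = w i - lse ε w := by
  rw [softmax, lse, log_div (exp_ne_zero _) (sum_exp_div_pos i.pos ε w).ne', log_exp]
  field_simp

lemma sum_mul_sub_eq (hε : ε ≠ 0) (a w w' : Fin m → ℝ) :
    ∑ i, a i * (w i - w' i) =
      ε * ∑ i, a i * (log (softmax ε w i) - log (softmax ε w' i)) +
        (lse ε w - lse ε w') * ∑ i, a i := by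
  have hsub : ∀ i, w i - w' i =
      ε * (log (softmax ε w i) - log (softmax ε w' i)) + (lse ε w - lse ε w') := fun i => by
    rw [mul_sub, mul_log_softmax hε, mul_log_softmax hε]
    ring
  simp_rw [hsub, mul_add, sum_add_distrib, mul_sum]
  congr 1 <;> exact sum_congr rfl fun i _ => by ring

theorem lse_sub_lse_sub_sum_softmax_mul_nonneg (hε : 0 < ε) (w w' : Fin m → ℝ) :
    0 ≤ lse ε w - lse ε w' - ∑ i, softmax ε w' i * (w i - w' i) := by
  rcases Nat.eq_zero_or_pos m with rfl | hm
  · simp [lse]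
  have hgibbs : ∑ i, softmax ε w' i * (log (softmax ε w i) - log (softmax ε w' i)) ≤ 0 :=
    calc _ ≤ ∑ i, (softmax ε w i - softmax ε w' i) :=
          sum_le_sum fun i _ => mul_log_sub_log_le_sub (softmax_pos ε w i) (softmax_pos ε w' i)
      _ = 0 := sum_softmax_sub_softmax ε w w'
  rw [sum_mul_sub_eq hε.ne', sum_softmax hm, mul_one]
  nlinarith

theorem mul_sum_sq_softmax_sub_le (hε : 0 < ε) (w w' : Fin m → ℝ) :
    ε * ∑ i, (softmax ε w i - softmax ε w' i) ^ 2 ≤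
      ∑ i, (w i - w' i) * (softmax ε w i - softmax ε w' i) := by
  simp_rw [mul_comm (w _ - w' _)]
  rw [sum_mul_sub_eq hε.ne', sum_softmax_sub_softmax, mul_zero, add_zero]
  refine mul_le_mul_of_nonneg_left (sum_le_sum fun i _ => ?_) hε.le
  rw [mul_comm]
  exact sq_sub_le_log_sub_log_mul_sub (softmax_pos ε w i) (softmax_le_one ε w i)
    (softmax_pos ε w' i) (softmax_le_one ε w' i)

theorem hasDerivAt_lse (hε : ε ≠ 0) {w : ℝ → Fin m → ℝ} {w' : Fin m → ℝ} {t : ℝ}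
    (hw : ∀ i, HasDerivAt (fun s => w s i) (w' i) t) :
    HasDerivAt (fun s => lse ε (w s)) (∑ i, softmax ε (w t) i * w' i) t := by
  rcases Nat.eq_zero_or_pos m with rfl | hm
  · simpa [lse] using hasDerivAt_const t (0 : ℝ)
  have hsum : HasDerivAt (fun s => ∑ j, exp (w s j / ε)) (∑ j, exp (w t j / ε) * (w' j / ε)) t :=
    HasDerivAt.fun_sum fun j _ => ((hw j).div_const ε).exp
  refine ((hsum.log (sum_exp_div_pos hm ε (w t)).ne').const_mul ε).congr_deriv ?_
  rw [← mul_div_assoc, mul_sum, sum_div]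
  refine sum_congr rfl fun j _ => ?_
  rw [softmax]
  field_simp

end Softmax

section Storage

variable {ε : ℝ} {N : ℕ} {nAct : Fin N → ℕ}

theorem bregV_nonneg (hε : 0 < ε) (zbar z : ∀ p, Fin (nAct p) → ℝ) : 0 ≤ bregV ε zbar z :=
  sum_nonneg fun p _ => lse_sub_lse_sub_sum_softmax_mul_nonneg hε (z p) (zbar p)

theorem bregV_self (zbar : ∀ p, Fin (nAct p) → ℝ) : bregV ε zbar zbar = 0 := by
  simp [bregV]

theorem hasDerivAt_bregV (hε : ε ≠ 0) (zbar : ∀ p, Fin (nAct p) → ℝ)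
    {z : ℝ → ∀ p, Fin (nAct p) → ℝ} {z' : ∀ p, Fin (nAct p) → ℝ} {t : ℝ}
    (hz : ∀ p i, HasDerivAt (fun s => z s p i) (z' p i) t) :
    HasDerivAt (fun s => bregV ε zbar (z s))
      (∑ p, ∑ i, (softmax ε (z t p) i - softmax ε (zbar p) i) * z' p i) t := by
  refine HasDerivAt.fun_sum fun p _ => ?_
  have hlin : HasDerivAt (fun s => ∑ i, softmax ε (zbar p) i * (z s p i - zbar p i))
      (∑ i, softmax ε (zbar p) i * z' p i) t :=
    HasDerivAt.fun_sum fun i _ => ((hz p i).sub_const _).const_mul _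
  refine (((hasDerivAt_lse hε (hz p)).sub_const (lse ε (zbar p))).sub hlin).congr_deriv ?_
  rw [← sum_sub_distrib]
  exact sum_congr rfl fun i _ => by ring

end Storage

theorem learning_block_OSEIP_general (ε γ : ℝ) (hε : 0 < ε) (hγ : 0 < γ)
    (N : ℕ) (nAct : Fin N → ℕ)
    (zbar : ∀ p, Fin (nAct p) → ℝ)
    (z u : ℝ → ∀ p, Fin (nAct p) → ℝ)
    (hz : ∀ t, ∀ p, ∀ i, HasDerivAt (fun s => z s p i) (γ * (u t p i - z t p i)) t) :
    (∀ w, 0 ≤ bregV ε zbar w) ∧ bregV ε zbar zbar = 0 ∧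
      ∀ t, deriv (fun s => bregV ε zbar (z s)) t ≤
        -γ * ε * ∑ p, ∑ i, (softmax ε (z t p) i - softmax ε (zbar p) i) ^ 2 +
          γ * ∑ p, ∑ i, (softmax ε (z t p) i - softmax ε (zbar p) i) * (u t p i - zbar p i) := by
  refine ⟨bregV_nonneg hε zbar, bregV_self zbar, fun t => ?_⟩
  rw [(hasDerivAt_bregV hε.ne' zbar (hz t)).deriv]
  have hsplit : ∑ p, ∑ i, (softmax ε (z t p) i - softmax ε (zbar p) i) * (γ * (u t p i - z t p i))
      = γ * ∑ p, ∑ i, (softmax ε (z t p) i - softmax ε (zbar p) i) * (u t p i - zbar p i) -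
        γ * ∑ p, ∑ i, (z t p i - zbar p i) * (softmax ε (z t p) i - softmax ε (zbar p) i) := by
    simp only [mul_sum, ← sum_sub_distrib]
    exact sum_congr rfl fun p _ => sum_congr rfl fun i _ => by ring
  have hmono : ε * ∑ p, ∑ i, (softmax ε (z t p) i - softmax ε (zbar p) i) ^ 2 ≤
      ∑ p, ∑ i, (z t p i - zbar p i) * (softmax ε (z t p) i - softmax ε (zbar p) i) := by
    rw [mul_sum]
    exact sum_le_sum fun p _ => mul_sum_sq_softmax_sub_le hε (z t p) (zbar p)
  rw [hsplit]
  nlinarith [mul_le_mul_of_nonneg_left hmono hγ.le]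

/-- Output-strict equilibrium-independent passivity of the learning block:
the storage function `V` is nonnegative, vanishes at `z̄`, and along any solution of
`ż = γ(u − z)` its derivative satisfies
`d/dt V(z(t)) ≤ −γε‖σ(z(t)) − σ(z̄)‖₂² + γ(σ(z(t)) − σ(z̄))ᵀ(u(t) − z̄)`. -/
theorem learning_block_OSEIP (ε γ : ℝ) (hε : 0 < ε) (hγ : 0 < γ)
    (N : ℕ) (nAct : Fin N → ℕ)
    (zbar : ∀ p, Fin (nAct p) → ℝ)
    (z u : ℝ → ∀ p, Fin (nAct p) → ℝ) (hu_cont : Continuous u)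
    (hz : ∀ t, ∀ p, ∀ i, HasDerivAt (fun s => z s p i) (γ * (u t p i - z t p i)) t) :
    (∀ w, 0 ≤ bregV ε zbar w) ∧ bregV ε zbar zbar = 0 ∧
      ∀ t, deriv (fun s => bregV ε zbar (z s)) t ≤
        -γ * ε * ∑ p, ∑ i, (softmax ε (z t p) i - softmax ε (zbar p) i) ^ 2 +
          γ * ∑ p, ∑ i, (softmax ε (z t p) i - softmax ε (zbar p) i) * (u t p i - zbar p i) :=
  learning_block_OSEIP_general ε γ hε hγ N nAct zbar z u hz
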